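/- With α the striction curve and λ the distribution parameter as above, the ruled surface ψ(u,v) in S^3(r) has a singular point at (u,v) (i.e., ψ_u × ψ_v = 0, equivalently g(u,v) = 0) if and only if sin(v/r) = 0 and λ(u) = 0. In particular, all singular points lie on the striction curve or its antipodal curve. -/

import Mathlib

/-- Euclidean inner product on `ℝ⁴`. -/
noncomputable def dot4 (u v : Fin 4 → ℝ) : ℝ := ∑ i, u i * v i

/-- Determinant of the 4×4 matrix with rows `a, b, c, d`. -/
noncomputable def det4 (a b c d : Fin 4 → ℝ) : ℝ := (Matrix.of ![a, b, c, d]).det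

/-!
Write `c = cos (v/r)`, `s = sin (v/r)`, `a = ⟨α', Z⟩` and `N = ∇_{α'}Z`. Differentiating the
constraints makes `α, Z, N, α'` orthogonal except for the pair `Z, α'`. The tangent vectors
`ψ_u = c α' + r s Z'` and `ψ_v = -(s/r) α + c Z` then give `g = c²(1 - a²) + r² s² ‖N‖²`,
while the Gram determinant of `(α, Z, N, α')` gives `det² = r² ‖N‖² (1 - a²)`. Hence `a² ≤ 1`,
`λ = 0` iff `a² = 1`, and `g`, a sum of two nonnegative terms, vanishes iff `s = 0` and `a² = 1`.
-/

open Matrix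

lemma dot4_eq_dotProduct (u v : Fin 4 → ℝ) : dot4 u v = u ⬝ᵥ v := rfl

lemma dot4_comm (u v : Fin 4 → ℝ) : dot4 u v = dot4 v u := dotProduct_comm u v

lemma dot4_add_left (x y w : Fin 4 → ℝ) : dot4 (x + y) w = dot4 x w + dot4 y w :=
  add_dotProduct x y w

lemma dot4_smul_left (k : ℝ) (x w : Fin 4 → ℝ) : dot4 (k • x) w = k * dot4 x w :=
  smul_dotProduct k x w

lemma dot4_self_pos {u : Fin 4 → ℝ} (hu : u ≠ 0) : 0 < dot4 u u :=
  (Finset.sum_nonneg fun i _ => mul_self_nonneg (u i)).lt_of_ne'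
    (dotProduct_self_eq_zero.not.2 hu)

lemma hasDerivAt_dot4 {f g : ℝ → Fin 4 → ℝ} {f' g' : Fin 4 → ℝ} {x : ℝ}
    (hf : HasDerivAt f f' x) (hg : HasDerivAt g g' x) :
    HasDerivAt (fun t => dot4 (f t) (g t)) (dot4 f' (g x) + dot4 (f x) g') x := by
  simp only [dot4, ← Finset.sum_add_distrib]
  exact HasDerivAt.fun_sum fun i _ => (hasDerivAt_pi.1 hf i).fun_mul (hasDerivAt_pi.1 hg i)

lemma dot4_deriv_add_dot4_deriv_eq_zero {f g : ℝ → Fin 4 → ℝ} {c x : ℝ}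
    (hf : DifferentiableAt ℝ f x) (hg : DifferentiableAt ℝ g x)
    (h : ∀ t, dot4 (f t) (g t) = c) :
    dot4 (deriv f x) (g x) + dot4 (f x) (deriv g x) = 0 :=
  (hasDerivAt_dot4 hf.hasDerivAt hg.hasDerivAt).unique
    (by simpa only [h] using hasDerivAt_const x c)

lemma det4_sq_eq_det_gram (a b c d : Fin 4 → ℝ) :
    det4 a b c d ^ 2 = (Matrix.of fun i j => dot4 (![a, b, c, d] i) (![a, b, c, d] j)).det := by
  have hgram : (Matrix.of fun i j => dot4 (![a, b, c, d] i) (![a, b, c, d] j))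
      = Matrix.of ![a, b, c, d] * (Matrix.of ![a, b, c, d])ᵀ := rfl
  rw [hgram, det_mul, det_transpose, det4, sq]

lemma hasDerivAt_cos_div_smul_add_sin_div_smul {r : ℝ} (hr : r ≠ 0) (A Z : Fin 4 → ℝ)
    (v : ℝ) :
    HasDerivAt (fun t => Real.cos (t / r) • A + (r * Real.sin (t / r)) • Z)
      ((-Real.sin (v / r) / r) • A + Real.cos (v / r) • Z) v := by
  have hdiv := (hasDerivAt_id v).div_const r
  have hsin := ((Real.hasDerivAt_sin (v / r)).comp v hdiv).const_mul r
  have hcos := (Real.hasDerivAt_cos (v / r)).comp v hdiv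
  refine ((hcos.smul_const A).add (hsin.smul_const Z)).congr_deriv ?_
  rw [mul_one_div, mul_one_div, mul_div_cancel₀ _ hr]

/-- Models `A = α u`, `Z = Z u`, `T = α' u` and `N = ∇_{α'}Z`, the derivative of `Z` projected
onto the tangent space of `S³(r)`. -/
structure IsStrictionFrame (r : ℝ) (A Z T N : Fin 4 → ℝ) : Prop where
  A_A : dot4 A A = r ^ 2
  Z_Z : dot4 Z Z = 1
  Z_A : dot4 Z A = 0
  T_A : dot4 T A = 0
  T_T : dot4 T T = 1
  N_A : dot4 N A = 0
  N_Z : dot4 N Z = 0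
  N_T : dot4 N T = 0

namespace IsStrictionFrame

variable {r : ℝ} {A Z T N : Fin 4 → ℝ}

theorem det4_sq (hF : IsStrictionFrame r A Z T N) :
    det4 A Z N T ^ 2 = r ^ 2 * (dot4 N N * (1 - dot4 T Z ^ 2)) := by
  obtain ⟨hAA, hZZ, hZA, hTA, hTT, hNA, hNZ, hNT⟩ := hF
  have hgram : (Matrix.of fun i j => dot4 (![A, Z, N, T] i) (![A, Z, N, T] j))
      = !![r ^ 2, 0, 0, 0; 0, 1, 0, dot4 T Z; 0, 0, dot4 N N, 0; 0, dot4 T Z, 0, 1] := by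
    ext i j
    fin_cases i <;> fin_cases j <;>
      simp [hAA, hZZ, hZA, hTA, hTT, hNA, hNZ, hNT, dot4_comm A Z, dot4_comm A N, dot4_comm A T,
        dot4_comm Z N, dot4_comm Z T, dot4_comm T N]
  rw [det4_sq_eq_det_gram, hgram, det_succ_row_zero]
  simp [Fin.sum_univ_succ, det_succ_row_zero, Fin.succAbove, -mul_eq_mul_left_iff]
  ring

theorem metric_det (hF : IsStrictionFrame r A Z T N) (hr : r ≠ 0) {Z' : Fin 4 → ℝ}
    (hN : N = Z' + (1 / r ^ 2 * dot4 T Z) • A) {c s : ℝ} (hcs : s ^ 2 + c ^ 2 = 1) :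
    dot4 (c • T + (r * s) • Z') (c • T + (r * s) • Z') *
        dot4 ((-s / r) • A + c • Z) ((-s / r) • A + c • Z) -
      dot4 (c • T + (r * s) • Z') ((-s / r) • A + c • Z) ^ 2 =
      c ^ 2 * (1 - dot4 T Z ^ 2) + r ^ 2 * s ^ 2 * dot4 N N := by
  obtain ⟨hAA, hZZ, hZA, hTA, hTT, hNA, hNZ, hNT⟩ := hF
  obtain rfl : Z' = N - (1 / r ^ 2 * dot4 T Z) • A := eq_sub_of_add_eq hN.symm
  simp only [dot4_eq_dotProduct] at *
  simp only [add_dotProduct, dotProduct_add, smul_dotProduct, dotProduct_smul, sub_dotProduct,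
    dotProduct_sub, smul_eq_mul, dotProduct_comm A Z, dotProduct_comm A T, dotProduct_comm A N,
    dotProduct_comm T N, hAA, hZZ, hZA, hTA, hTT, hNA, hNZ, hNT]
  field_simp
  linear_combination
    (c ^ 2 * r ^ 2 - c ^ 2 * r ^ 2 * (T ⬝ᵥ Z) ^ 2 + r ^ 4 * s ^ 2 * N ⬝ᵥ N) * hcs

end IsStrictionFrame

theorem isStrictionFrame_of_deriv {r : ℝ} (hr : r ≠ 0) {α Z : ℝ → Fin 4 → ℝ} {u : ℝ}
    (hα : DifferentiableAt ℝ α u) (hZ : DifferentiableAt ℝ Z u)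
    (hsph : ∀ t, dot4 (α t) (α t) = r ^ 2) (hunit : dot4 (deriv α u) (deriv α u) = 1)
    (hZ1 : ∀ t, dot4 (Z t) (Z t) = 1) (hZα : ∀ t, dot4 (Z t) (α t) = 0)
    (hstr : dot4 (deriv α u) (deriv Z u + (1 / r ^ 2 * dot4 (deriv α u) (Z u)) • α u) = 0) :
    IsStrictionFrame r (α u) (Z u) (deriv α u)
      (deriv Z u + (1 / r ^ 2 * dot4 (deriv α u) (Z u)) • α u) := by
  have hαα := dot4_deriv_add_dot4_deriv_eq_zero hα hα hsph
  have hZZ := dot4_deriv_add_dot4_deriv_eq_zero hZ hZ hZ1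
  have hZα' := dot4_deriv_add_dot4_deriv_eq_zero hZ hα hZα
  refine ⟨hsph u, hZ1 u, hZα u, ?_, hunit, ?_, ?_, dot4_comm _ _ ▸ hstr⟩
  · linarith [dot4_comm (α u) (deriv α u)]
  · rw [dot4_add_left, dot4_smul_left, hsph u]
    field_simp
    linarith [dot4_comm (Z u) (deriv α u)]
  · rw [dot4_add_left, dot4_smul_left, dot4_comm (α u), hZα u, mul_zero, add_zero]
    linarith [dot4_comm (Z u) (deriv Z u)]

theorem metric_det_eq_zero_iff {c s r m a D : ℝ} (hc : c ≠ 0) (hr : r ≠ 0) (hm : 0 < m)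
    (hD : D ^ 2 = r ^ 2 * (m * (1 - a ^ 2))) :
    c ^ 2 * (1 - a ^ 2) + r ^ 2 * s ^ 2 * m = 0 ↔ s = 0 ∧ D / m = 0 := by
  have ha : 0 ≤ 1 - a ^ 2 := by
    rw [← mul_assoc] at hD
    exact (mul_nonneg_iff_of_pos_left (by positivity)).mp (hD ▸ sq_nonneg D)
  rw [div_eq_zero_iff, or_iff_left hm.ne', ← pow_eq_zero_iff (a := D) two_ne_zero, hD,
    add_eq_zero_iff_of_nonneg (mul_nonneg (sq_nonneg c) ha) (by positivity), and_comm]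
  simp [hc, hr, hm.ne']

/-- with `α` the striction curve and `λ` the distribution parameter, the ruled
surface `ψ(u,v) = cos(v/r)α(u) + r sin(v/r)Z(u)` in `S³(r)` is singular at `(u,v)`
(i.e. `g(u,v) = g₁₁g₂₂ − g₁₂² = 0`) if and only if `sin(v/r) = 0` and `λ(u) = 0`. -/
theorem ruled_surface_singular_iff (r : ℝ) (hr : 0 < r) (α Z : ℝ → Fin 4 → ℝ)
    (hα : Differentiable ℝ α) (hZ : Differentiable ℝ Z)
    (hsph : ∀ u, dot4 (α u) (α u) = r ^ 2)
    (hunit : ∀ u, dot4 (deriv α u) (deriv α u) = 1)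
    (hZ1 : ∀ u, dot4 (Z u) (Z u) = 1)
    (hZα : ∀ u, dot4 (Z u) (α u) = 0) :
    let ψ : ℝ → ℝ → Fin 4 → ℝ :=
      fun u v => Real.cos (v / r) • α u + (r * Real.sin (v / r)) • Z u
    let DZ : ℝ → Fin 4 → ℝ :=
      fun u => deriv Z u + ((1 / r ^ 2) * dot4 (deriv α u) (Z u)) • α u
    let lam : ℝ → ℝ :=
      fun u => det4 (α u) (Z u) (DZ u) (deriv α u) / dot4 (DZ u) (DZ u)
    let g₁₁ : ℝ → ℝ → ℝ :=
      fun u v => dot4 (deriv (fun t => ψ t v) u) (deriv (fun t => ψ t v) u)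
    let g₁₂ : ℝ → ℝ → ℝ :=
      fun u v => dot4 (deriv (fun t => ψ t v) u) (deriv (fun t => ψ u t) v)
    let g₂₂ : ℝ → ℝ → ℝ :=
      fun u v => dot4 (deriv (fun t => ψ u t) v) (deriv (fun t => ψ u t) v)
    (∀ u, dot4 (deriv α u) (DZ u) = 0) →  -- α is the striction curve
    (∀ u, DZ u ≠ 0) →
    ∀ u v, Real.cos (v / r) ≠ 0 →
      (g₁₁ u v * g₂₂ u v - g₁₂ u v ^ 2 = 0
        ↔ Real.sin (v / r) = 0 ∧ lam u = 0) := by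
  intro ψ DZ lam g₁₁ g₁₂ g₂₂ hstr hDZ u v hcos
  have hF : IsStrictionFrame r (α u) (Z u) (deriv α u) (DZ u) :=
    isStrictionFrame_of_deriv hr.ne' (hα u) (hZ u) hsph (hunit u) hZ1 hZα (hstr u)
  have hψu : deriv (fun t => ψ t v) u =
      Real.cos (v / r) • deriv α u + (r * Real.sin (v / r)) • deriv Z u :=
    (((hα u).hasDerivAt.const_smul (Real.cos (v / r))).add
      ((hZ u).hasDerivAt.const_smul (r * Real.sin (v / r)))).deriv
  have hψv : deriv (fun t => ψ u t) v =
      (-Real.sin (v / r) / r) • α u + Real.cos (v / r) • Z u :=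
    (hasDerivAt_cos_div_smul_add_sin_div_smul hr.ne' (α u) (Z u) v).deriv
  have hg : g₁₁ u v * g₂₂ u v - g₁₂ u v ^ 2 =
      Real.cos (v / r) ^ 2 * (1 - dot4 (deriv α u) (Z u) ^ 2) +
        r ^ 2 * Real.sin (v / r) ^ 2 * dot4 (DZ u) (DZ u) := by
    simp only [g₁₁, g₁₂, g₂₂, hψu, hψv]
    exact hF.metric_det hr.ne' rfl (Real.sin_sq_add_cos_sq _)
  rw [hg]
  exact metric_det_eq_zero_iff hcos hr.ne' (dot4_self_pos (hDZ u)) hF.det4_sq
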